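/- arXiv:2510.02721 — 2 statements merged into one kernel-verified Lean document; each statement's English description precedes it below -/
import Mathlib

section
/- Let α < β be real numbers, γ > 0, and σ > 0. Let Q and E be independent real random variables where Q has CDF F_Q(y) = 0 for y < α, F_Q(y) = ((y − α)/(β − α))^{γ/2} for α ≤ y ≤ β, and F_Q(y) = 1 for y > β, and E is normally distributed with mean 0 and standard deviation σ. Then the CDF of Y = Q + E satisfies, for every real y, F_Y(y) = Φ((y − β)/σ) + ∫_0^1 v^{γ/2} · (1/s)·φ((v − m)/s) dv, where m = (y − α)/(β − α), s = σ/(β − α), Φ is the standard normal CDF, and φ is the standard normal density. -/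
open MeasureTheory ProbabilityTheory Set

/-- The standard normal density `φ(u) = (2π)^{-1/2} e^{-u²/2}`. -/
noncomputable def stdNormalPDF (u : ℝ) : ℝ :=
  (Real.sqrt (2 * Real.pi))⁻¹ * Real.exp (-(u ^ 2) / 2)

/-- The standard normal CDF `Φ(t) = ∫_{-∞}^t φ(u) du`. -/
noncomputable def stdNormalCDF (t : ℝ) : ℝ :=
  ∫ u in Set.Iic t, stdNormalPDF u

open scoped NNReal ENNReal
lemma scale_Iic (σ : ℝ) (hσ : 0 < σ) (g : ℝ → ℝ) (c : ℝ) :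
    ∫ e in Iic c, g e = σ * ∫ u in Iic (c / σ), g (σ * u) := by
  have hT : MeasurableEmbedding (fun u : ℝ => σ * u) :=
    (Homeomorph.mulLeft₀ σ hσ.ne').measurableEmbedding
  have hmap : Measure.map (fun u : ℝ => σ * u) volume
      = ENNReal.ofReal |σ⁻¹| • volume := Real.map_volume_mul_left hσ.ne'
  have h1 : ∫ e in Iic c, g e ∂(Measure.map (fun u : ℝ => σ * u) volume)
      = ∫ u in (fun u : ℝ => σ * u) ⁻¹' (Iic c), g (σ * u) := hT.setIntegral_map g _
  rw [hmap] at h1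
  rw [Measure.restrict_smul, integral_smul_measure] at h1
  have hpre : (fun u : ℝ => σ * u) ⁻¹' (Iic c) = Iic (c / σ) := by
    ext u; simp [le_div_iff₀ hσ, mul_comm]
  rw [hpre] at h1
  have : (ENNReal.ofReal |σ⁻¹|).toReal = σ⁻¹ := by
    rw [ENNReal.toReal_ofReal (abs_nonneg _), abs_of_pos (inv_pos.mpr hσ)]
  rw [this, smul_eq_mul] at h1
  field_simp at h1 ⊢
  linarith [h1]

lemma gauss_Iic (σ : ℝ) (hσ : 0 < σ) (c : ℝ) :
    ∫ e in Iic c, gaussianPDFReal 0 ⟨σ ^ 2, sq_nonneg σ⟩ e = stdNormalCDF (c / σ) := by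
  rw [scale_Iic σ hσ _ c, stdNormalCDF, ← integral_const_mul]
  refine setIntegral_congr_fun measurableSet_Iic (fun u _ => ?_)
  unfold gaussianPDFReal stdNormalPDF
  have h2π : (0:ℝ) ≤ 2 * Real.pi := by positivity
  change σ * ((Real.sqrt (2 * Real.pi * σ ^ 2))⁻¹ * Real.exp (-(σ * u - 0) ^ 2 / (2 * σ ^ 2))) = _
  rw [show 2 * Real.pi * σ ^ 2 = (2 * Real.pi) * σ ^ 2 by ring, Real.sqrt_mul h2π,
    Real.sqrt_sq hσ.le]
  have he : -(σ * u - 0) ^ 2 / (2 * σ ^ 2) = -(u ^ 2) / 2 := by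
    field_simp; ring
  rw [he]
  field_simp

lemma interval_sub (α β γ σ y : ℝ) (hab : α < β) (hσ : 0 < σ) :
    (∫ v in (0:ℝ)..1, v ^ (γ / 2) *
        ((1 / (σ / (β - α))) * stdNormalPDF ((v - (y - α) / (β - α)) / (σ / (β - α)))))
      = ∫ e in (y - β)..(y - α),
          gaussianPDFReal 0 ⟨σ ^ 2, sq_nonneg σ⟩ e * ((y - e - α) / (β - α)) ^ (γ / 2) := by
  have hba : (0:ℝ) < β - α := by linarith
  set G : ℝ → ℝ := fun e =>
    gaussianPDFReal 0 ⟨σ ^ 2, sq_nonneg σ⟩ e * ((y - e - α) / (β - α)) ^ (γ / 2) with hG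
  have hpt : ∀ v : ℝ, v ^ (γ / 2) *
      ((1 / (σ / (β - α))) * stdNormalPDF ((v - (y - α) / (β - α)) / (σ / (β - α))))
      = (β - α) * G (-(β - α) * v + (y - α)) := by
    intro v
    have hbase : (y - (-(β - α) * v + (y - α)) - α) / (β - α) = v := by
      field_simp
      ring
    have hexp : -((v - (y - α) / (β - α)) / (σ / (β - α))) ^ 2 / 2
        = -((-(β - α) * v + (y - α)) - 0) ^ 2 / (2 * (σ ^ 2)) := by
      field_simp
      ring
    rw [hG]
    simp only [stdNormalPDF, gaussianPDFReal, NNReal.coe_mk]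
    change _ = (β - α) * ((Real.sqrt (2 * Real.pi * σ ^ 2))⁻¹ * Real.exp (-(-(β - α) * v + (y - α) - 0) ^ 2 / (2 * σ ^ 2)) *
      ((y - (-(β - α) * v + (y - α)) - α) / (β - α)) ^ (γ / 2))
    rw [hbase, hexp, show 2 * Real.pi * σ ^ 2 = (2 * Real.pi) * σ ^ 2 by ring,
      Real.sqrt_mul (by positivity : (0:ℝ) ≤ 2 * Real.pi), Real.sqrt_sq hσ.le]
    have h1 : Real.sqrt (2 * Real.pi) ≠ 0 := by positivity
    field_simp
  calc (∫ v in (0:ℝ)..1, v ^ (γ / 2) *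
        ((1 / (σ / (β - α))) * stdNormalPDF ((v - (y - α) / (β - α)) / (σ / (β - α)))))
      = ∫ v in (0:ℝ)..1, (β - α) * G (-(β - α) * v + (y - α)) := by
        apply intervalIntegral.integral_congr; intro v _; exact hpt v
    _ = (β - α) * ∫ v in (0:ℝ)..1, G (-(β - α) * v + (y - α)) := by
        rw [intervalIntegral.integral_const_mul]
    _ = (β - α) * ((-(β - α))⁻¹ •
          ∫ e in (-(β - α) * 0 + (y - α))..(-(β - α) * 1 + (y - α)), G e) := by
        rw [intervalIntegral.integral_comp_mul_add G (by linarith : -(β - α) ≠ 0) (y - α)]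
    _ = ∫ e in (y - β)..(y - α), G e := by
        rw [show -(β - α) * 0 + (y - α) = y - α by ring,
          show -(β - α) * 1 + (y - α) = y - β by ring,
          intervalIntegral.integral_symm, smul_eq_mul, inv_neg]
        simp only [mul_neg, neg_mul, neg_neg]
        exact mul_inv_cancel_left₀ (by linarith : β - α ≠ 0) _

/-- If `Q` has the convex quadratic distribution with parameters
`α < β`, `γ > 0`, and `E` is an independent normal with mean `0` and standard deviation
`σ > 0`, then the CDF of `Y = Q + E` is
`F_Y(y) = Φ((y−β)/σ) + ∫_0^1 v^{γ/2}·(1/s)·φ((v−m)/s) dv`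
with `m = (y−α)/(β−α)` and `s = σ/(β−α)`. -/
theorem stmt3 (α β γ σ : ℝ) (hab : α < β) (hγ : 0 < γ) (hσ : 0 < σ)
    {Ω : Type*} [MeasurableSpace Ω] (P : MeasureTheory.Measure Ω) [IsProbabilityMeasure P]
    (Q E : Ω → ℝ) (hQm : Measurable Q) (hEm : Measurable E)
    (hindep : IndepFun Q E P)
    (hQ : ∀ y : ℝ, (P {ω | Q ω ≤ y}).toReal =
      if y < α then 0 else if y ≤ β then ((y - α) / (β - α)) ^ (γ / 2) else 1)
    (hE : P.map E = gaussianReal 0 ⟨σ ^ 2, sq_nonneg σ⟩) :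
    ∀ y : ℝ,
      (P {ω | Q ω + E ω ≤ y}).toReal =
        stdNormalCDF ((y - β) / σ) +
          ∫ v in (0 : ℝ)..1,
            v ^ (γ / 2) *
              ((1 / (σ / (β - α))) *
                stdNormalPDF ((v - (y - α) / (β - α)) / (σ / (β - α)))) := by
  intro y
  have hba : (0:ℝ) < β - α := by linarith
  set v2 : ℝ≥0 := ⟨σ ^ 2, sq_nonneg σ⟩ with hv2
  have hv2ne : v2 ≠ 0 := by
    intro h
    have h' : (v2 : ℝ) = 0 := by rw [h]; simp
    rw [hv2] at h'
    exact (pow_ne_zero 2 hσ.ne') h'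
  set F : ℝ → ℝ := fun t =>
    if t < α then 0 else if t ≤ β then ((t - α) / (β - α)) ^ (γ / 2) else 1 with hFdef
  have hFmeas : Measurable F := by
    apply Measurable.ite (measurableSet_lt measurable_id measurable_const) measurable_const
    apply Measurable.ite (measurableSet_le measurable_id measurable_const) ?_ measurable_const
    exact (Real.continuous_rpow_const (by positivity : (0:ℝ) ≤ γ / 2)).measurable.comp
      ((measurable_id.sub measurable_const).div_const _)
  have hF01 : ∀ t, 0 ≤ F t ∧ F t ≤ 1 := by
    intro t
    rw [hFdef]
    simp only
    split_ifs with h1 h2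
    · exact ⟨le_refl 0, zero_le_one⟩
    · push_neg at h1
      constructor
      · exact Real.rpow_nonneg (div_nonneg (by linarith) hba.le) _
      · exact Real.rpow_le_one (div_nonneg (by linarith) hba.le)
          (by rw [div_le_one hba]; linarith) (by positivity)
    · exact ⟨zero_le_one, le_refl 1⟩
  haveI : IsProbabilityMeasure (P.map Q) := Measure.isProbabilityMeasure_map hQm.aemeasurable
  haveI : IsProbabilityMeasure (P.map E) := Measure.isProbabilityMeasure_map hEm.aemeasurable
  have hsmeas : MeasurableSet {p : ℝ × ℝ | p.2 + p.1 ≤ y} :=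
    measurableSet_le (measurable_snd.add measurable_fst) measurable_const
  have hsec : ∀ e : ℝ, Prod.mk e ⁻¹' {p : ℝ × ℝ | p.2 + p.1 ≤ y} = Iic (y - e) := by
    intro e; ext q
    simp only [Set.mem_preimage, Set.mem_setOf_eq, Set.mem_Iic]
    constructor <;> intro h <;> linarith
  have hmapEQ : P.map (fun ω => (E ω, Q ω)) = (P.map E).prod (P.map Q) :=
    (indepFun_iff_map_prod_eq_prod_map_map hEm.aemeasurable hQm.aemeasurable).mp hindep.symm
  have h1 : P {ω | Q ω + E ω ≤ y} = ∫⁻ e, (P.map Q) (Iic (y - e)) ∂(P.map E) := by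
    have hset : {ω | Q ω + E ω ≤ y}
        = (fun ω => (E ω, Q ω)) ⁻¹' {p : ℝ × ℝ | p.2 + p.1 ≤ y} := by
      ext ω; simp only [Set.mem_setOf_eq, Set.mem_preimage]
    rw [hset, ← Measure.map_apply (hEm.prodMk hQm) hsmeas, hmapEQ,
      Measure.prod_apply hsmeas]
    simp_rw [hsec]
  have hmg : Measurable fun e => (P.map Q) (Iic (y - e)) := by
    have h := measurable_measure_prodMk_left (ν := P.map Q) hsmeas
    simp_rw [hsec] at h
    exact h
  have hFt : ∀ t, ((P.map Q) (Iic t)).toReal = F t := by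
    intro t
    rw [Measure.map_apply hQm measurableSet_Iic]
    exact hQ t
  have h2 : (P {ω | Q ω + E ω ≤ y}).toReal = ∫ e, F (y - e) ∂(P.map E) := by
    rw [h1, ← integral_toReal hmg.aemeasurable (ae_of_all _ fun e => measure_lt_top _ _)]
    exact integral_congr_ae (ae_of_all _ fun e => hFt (y - e))
  have h3 : ∫ e, F (y - e) ∂(P.map E)
      = ∫ e, gaussianPDFReal 0 v2 e * F (y - e) := by
    rw [hE, gaussianReal_of_var_ne_zero _ hv2ne]
    have hgp : gaussianPDF 0 v2 = fun x => ((gaussianPDFReal 0 v2 x).toNNReal : ℝ≥0∞) := rfl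
    rw [hgp, integral_withDensity_eq_integral_smul
      (measurable_gaussianPDFReal 0 v2).real_toNNReal _]
    refine integral_congr_ae (ae_of_all _ fun e => ?_)
    simp only [NNReal.smul_def, smul_eq_mul]
    rw [Real.coe_toNNReal _ (gaussianPDFReal_nonneg _ _ _)]
  have hint : Integrable (fun e => gaussianPDFReal 0 v2 e * F (y - e)) volume := by
    refine (integrable_gaussianPDFReal 0 v2).mono ?_ (ae_of_all _ fun e => ?_)
    · exact ((measurable_gaussianPDFReal 0 v2).mul
        (hFmeas.comp (measurable_const.sub measurable_id))).aestronglyMeasurable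
    · rw [Real.norm_eq_abs, Real.norm_eq_abs, abs_mul]
      calc |gaussianPDFReal 0 v2 e| * |F (y - e)| ≤ |gaussianPDFReal 0 v2 e| * 1 := by
            apply mul_le_mul_of_nonneg_left _ (abs_nonneg _)
            rw [abs_le]
            exact ⟨by linarith [(hF01 (y - e)).1], (hF01 (y - e)).2⟩
        _ = |gaussianPDFReal 0 v2 e| := mul_one _
  have hsplit1 : ∫ e, gaussianPDFReal 0 v2 e * F (y - e)
      = (∫ e in Iic (y - β), gaussianPDFReal 0 v2 e * F (y - e))
        + ∫ e in Ioi (y - β), gaussianPDFReal 0 v2 e * F (y - e) :=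
    (intervalIntegral.integral_Iic_add_Ioi hint.integrableOn hint.integrableOn).symm
  have hsplit2 : ∫ e in Ioi (y - β), gaussianPDFReal 0 v2 e * F (y - e)
      = (∫ e in Ioc (y - β) (y - α), gaussianPDFReal 0 v2 e * F (y - e))
        + ∫ e in Ioi (y - α), gaussianPDFReal 0 v2 e * F (y - e) := by
    rw [← Ioc_union_Ioi_eq_Ioi (by linarith : y - β ≤ y - α),
      setIntegral_union (Ioc_disjoint_Ioi le_rfl) measurableSet_Ioi
        hint.integrableOn hint.integrableOn]
  have hterm1 : ∫ e in Iic (y - β), gaussianPDFReal 0 v2 e * F (y - e)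
      = stdNormalCDF ((y - β) / σ) := by
    rw [← gauss_Iic σ hσ (y - β)]
    refine setIntegral_congr_fun measurableSet_Iic fun e he => ?_
    have he' : e ≤ y - β := he
    have hF1 : F (y - e) = 1 := by
      rw [hFdef]
      simp only
      rw [if_neg (by push_neg; linarith : ¬ (y - e < α))]
      by_cases h : y - e ≤ β
      · rw [if_pos h, show y - e - α = (y - e) - α from rfl]
        have : y - e = β := le_antisymm h (by linarith)
        rw [this, div_self (by linarith), Real.one_rpow]
      · rw [if_neg h]
    rw [hF1, mul_one, hv2]
  have hterm3 : ∫ e in Ioi (y - α), gaussianPDFReal 0 v2 e * F (y - e) = 0 := by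
    have heq : EqOn (fun e => gaussianPDFReal 0 v2 e * F (y - e)) (fun _ => 0) (Ioi (y - α)) := by
      intro e he
      have he' : y - α < e := he
      have hF0 : F (y - e) = 0 := by
        rw [hFdef]; simp only
        rw [if_pos (by linarith : y - e < α)]
      simp [hF0]
    rw [setIntegral_congr_fun measurableSet_Ioi heq]
    simp
  have hterm2 : ∫ e in Ioc (y - β) (y - α), gaussianPDFReal 0 v2 e * F (y - e)
      = ∫ e in (y - β)..(y - α),
          gaussianPDFReal 0 ⟨σ ^ 2, sq_nonneg σ⟩ e * ((y - e - α) / (β - α)) ^ (γ / 2) := by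
    rw [intervalIntegral.integral_of_le (by linarith : y - β ≤ y - α)]
    refine setIntegral_congr_fun measurableSet_Ioc fun e he => ?_
    have h1 : y - β < e := he.1
    have h2 : e ≤ y - α := he.2
    have hFmid : F (y - e) = ((y - e - α) / (β - α)) ^ (γ / 2) := by
      rw [hFdef]; simp only
      rw [if_neg (by push_neg; linarith : ¬ (y - e < α)), if_pos (by linarith : y - e ≤ β)]
    rw [hFmid, hv2]
  rw [h2, h3, hsplit1, hsplit2, hterm1, hterm2, hterm3, add_zero,
    interval_sub α β γ σ y hab hσ]
end

section
/- Let α < β be real numbers, γ > 0, and σ > 0. Let Q and E be independent real random variables where Q has CDF F_Q(y) = 0 for y < α, F_Q(y) = ((y − α)/(β − α))^{γ/2} for α ≤ y ≤ β, and F_Q(y) = 1 for y > β, and E is normally distributed with mean 0 and standard deviation σ. Then Y = Q + E has a density f_Y with respect to Lebesgue measure given, for every real y, by f_Y(y) = (γ/(2(β − α))) · ∫_0^1 v^{(γ−2)/2} · (1/s)·φ((v − m)/s) dv, where m = (y − α)/(β − α), s = σ/(β − α), and φ is the standard normal density. -/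
open MeasureTheory ProbabilityTheory Set

/-! The CDF `((y - α)/(β - α))^{γ/2}` is absolutely continuous on `[α, β]`: by the fundamental
theorem of calculus, `Q` has the density `f_Q` obtained by differentiating it (integrable near `α`
because `(γ - 2)/2 > -1`). By independence the law of `Q + E` is the convolution of the laws of `Q`
and `E`, so it has density `t ↦ ∫ f_Q(q) φ_σ(t - q) dq`, and the substitution
`q = α + (β - α) v` turns this into the stated integral over `[0, 1]`. -/

open scoped ENNReal NNReal

lemma measure_eq_withDensity_of_measureReal_Iic {μ : Measure ℝ} [IsFiniteMeasure μ] {f : ℝ → ℝ}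
    (hf : Integrable f) (hf0 : 0 ≤ f) (h : ∀ x, μ.real (Iic x) = ∫ t in Iic x, f t) :
    μ = volume.withDensity fun t => ENNReal.ofReal (f t) := by
  have := isFiniteMeasure_withDensity_ofReal hf.2
  refine Measure.ext_of_Iic _ _ fun x => ?_
  rw [withDensity_apply _ measurableSet_Iic,
    ← ofReal_integral_eq_lintegral_ofReal hf.restrict (ae_of_all _ hf0), ← h x, ofReal_measureReal]

namespace ProbabilityTheory

theorem IndepFun.measureReal_add_le_eq_integral_conv {Ω : Type*} [MeasurableSpace Ω]
    {P : Measure Ω} [IsFiniteMeasure P] {X Y : Ω → ℝ} (hX : Measurable X) (hY : Measurable Y)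
    (hXY : IndepFun X Y P) {f g : ℝ → ℝ} (hf : Measurable f) (hg : Measurable g)
    (hf0 : 0 ≤ f) (hg0 : 0 ≤ g)
    (hlawX : P.map X = volume.withDensity fun t => ENNReal.ofReal (f t))
    (hlawY : P.map Y = volume.withDensity fun t => ENNReal.ofReal (g t)) (y : ℝ) :
    P.real {ω | X ω + Y ω ≤ y} = ∫ t in Iic y, ∫ q, f q * g (t - q) := by
  have hF : Measurable fun t => ENNReal.ofReal (f t) := hf.ennreal_ofReal
  have hG : Measurable fun t => ENNReal.ofReal (g t) := hg.ennreal_ofReal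
  set k := (fun t => ENNReal.ofReal (f t)) ⋆ₗ[volume] fun t => ENNReal.ofReal (g t)
  have hlaw : P.map (X + Y) = volume.withDensity k := by
    rw [hXY.map_add_eq_map_conv_map hX hY, hlawX, hlawY, conv_withDensity_eq_lconvolution hF hG]
  have hk : Measurable k := measurable_lconvolution _ hF hG
  have hmass : P.real {ω | X ω + Y ω ≤ y} = (∫⁻ t in Iic y, k t).toReal := by
    rw [← withDensity_apply _ measurableSet_Iic, ← hlaw,
      Measure.map_apply (hX.add hY) measurableSet_Iic]
    rfl
  have hfin : ∀ᵐ t ∂volume.restrict (Iic y), k t < ∞ := by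
    refine ae_lt_top' hk.aemeasurable ?_
    rw [← withDensity_apply _ measurableSet_Iic, ← hlaw]
    exact measure_ne_top _ _
  rw [hmass, ← integral_toReal hk.aemeasurable hfin]
  refine setIntegral_congr_fun measurableSet_Iic fun t _ => ?_
  have hfg : Measurable fun q => f q * g (t - q) := by fun_prop
  rw [integral_eq_lintegral_of_nonneg_ae (ae_of_all _ fun q => mul_nonneg (hf0 q) (hg0 _))
    hfg.aestronglyMeasurable]
  simp only [k, lconvolution_def, ENNReal.ofReal_mul (hf0 _), neg_add_eq_sub]

end ProbabilityTheory

noncomputable def convexQuadraticPDF (α β γ : ℝ) : ℝ → ℝ :=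
  (Ioc α β).indicator fun q => γ / (2 * (β - α)) * ((q - α) / (β - α)) ^ ((γ - 2) / 2)

section ConvexQuadratic

variable {α β γ : ℝ}

lemma hasDerivAt_convexQuadraticCDF (hab : α < β) {q : ℝ} (hq : α < q) :
    HasDerivAt (fun x => ((x - α) / (β - α)) ^ (γ / 2))
      (γ / (2 * (β - α)) * ((q - α) / (β - α)) ^ ((γ - 2) / 2)) q := by
  have hpos : 0 < (q - α) / (β - α) := div_pos (by linarith) (by linarith)
  refine ((((hasDerivAt_id q).sub_const α).div_const (β - α)).rpow_const
    (p := γ / 2) (Or.inl hpos.ne')).congr_deriv ?_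
  rw [show γ / 2 - 1 = (γ - 2) / 2 by ring]
  simp only [id]
  field_simp

lemma continuous_convexQuadraticCDF (hγ : 0 < γ) :
    Continuous fun x => ((x - α) / (β - α)) ^ (γ / 2) :=
  Continuous.rpow_const (by fun_prop) fun _ => Or.inr (by positivity)

lemma integrableOn_convexQuadratic_Ioc (hab : α < β) (hγ : 0 < γ) (w : ℝ) :
    IntegrableOn (fun q => γ / (2 * (β - α)) * ((q - α) / (β - α)) ^ ((γ - 2) / 2)) (Ioc α w) :=
  intervalIntegral.integrableOn_deriv_of_nonneg (continuous_convexQuadraticCDF hγ).continuousOn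
    (fun q hq => hasDerivAt_convexQuadraticCDF hab hq.1) fun q hq =>
      mul_nonneg (div_nonneg hγ.le (by linarith))
        (Real.rpow_nonneg (div_nonneg (by linarith [hq.1]) (by linarith)) _)

lemma integral_convexQuadratic_Ioc (hab : α < β) (hγ : 0 < γ) {w : ℝ} (hw : α ≤ w) :
    ∫ q in Ioc α w, γ / (2 * (β - α)) * ((q - α) / (β - α)) ^ ((γ - 2) / 2) =
      ((w - α) / (β - α)) ^ (γ / 2) := by
  rw [← intervalIntegral.integral_of_le hw, intervalIntegral.integral_eq_sub_of_hasDerivAt_of_le hw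
    (continuous_convexQuadraticCDF hγ).continuousOn
    (fun q hq => hasDerivAt_convexQuadraticCDF hab hq.1)
    ((intervalIntegrable_iff_integrableOn_Ioc_of_le hw).2
      (integrableOn_convexQuadratic_Ioc hab hγ w))]
  simp [Real.zero_rpow (by positivity : γ / 2 ≠ 0)]

lemma convexQuadraticPDF_nonneg (hab : α < β) (hγ : 0 < γ) : 0 ≤ convexQuadraticPDF α β γ :=
  fun _ => indicator_nonneg (fun q hq => mul_nonneg (div_nonneg hγ.le (by linarith))
    (Real.rpow_nonneg (div_nonneg (by linarith [hq.1]) (by linarith)) _)) _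

lemma measurable_convexQuadraticPDF : Measurable (convexQuadraticPDF α β γ) :=
  Measurable.indicator (by fun_prop) measurableSet_Ioc

lemma integrable_convexQuadraticPDF (hab : α < β) (hγ : 0 < γ) :
    Integrable (convexQuadraticPDF α β γ) :=
  (integrableOn_convexQuadratic_Ioc hab hγ β).integrable_indicator measurableSet_Ioc

lemma setIntegral_convexQuadraticPDF_Iic (hab : α < β) (hγ : 0 < γ) (x : ℝ) :
    ∫ q in Iic x, convexQuadraticPDF α β γ q =
      if x < α then 0 else if x ≤ β then ((x - α) / (β - α)) ^ (γ / 2) else 1 := by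
  rw [convexQuadraticPDF, integral_indicator measurableSet_Ioc,
    Measure.restrict_restrict measurableSet_Ioc, Ioc_inter_Iic]
  split_ifs with hxα hxβ
  · rw [Ioc_eq_empty_of_le (min_le_of_right_le hxα.le), Measure.restrict_empty,
      integral_zero_measure]
  · rw [min_eq_right hxβ, integral_convexQuadratic_Ioc hab hγ (not_lt.1 hxα)]
  · rw [min_eq_left (by linarith), integral_convexQuadratic_Ioc hab hγ hab.le,
      div_self (by linarith), Real.one_rpow]

end ConvexQuadratic

open Real in
lemma gaussianPDFReal_zero_eq_stdNormalPDF {σ : ℝ} (hσ : 0 < σ) (x : ℝ) :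
    gaussianPDFReal 0 ⟨σ ^ 2, sq_nonneg σ⟩ x = σ⁻¹ * stdNormalPDF (x / σ) := by
  change (√(2 * π * σ ^ 2))⁻¹ * rexp (-(x - 0) ^ 2 / (2 * σ ^ 2)) = σ⁻¹ * stdNormalPDF (x / σ)
  rw [stdNormalPDF, sub_zero, Real.sqrt_mul (by positivity), Real.sqrt_sq hσ.le]
  field_simp

-- The substitution `q = α + (β - α) v` maps `(0, 1]` onto the support `(α, β]`.
lemma integral_convexQuadraticPDF_mul_gaussianPDFReal {α β γ σ : ℝ} (hab : α < β) (hσ : 0 < σ)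
    (t : ℝ) :
    ∫ q, convexQuadraticPDF α β γ q * gaussianPDFReal 0 ⟨σ ^ 2, sq_nonneg σ⟩ (t - q) =
      γ / (2 * (β - α)) * ∫ v in (0 : ℝ)..1, v ^ ((γ - 2) / 2) *
        ((1 / (σ / (β - α))) * stdNormalPDF ((v - (t - α) / (β - α)) / (σ / (β - α)))) := by
  have hδ : β - α ≠ 0 := by linarith
  set H : ℝ → ℝ := fun q => γ / (2 * (β - α)) * ((q - α) / (β - α)) ^ ((γ - 2) / 2) *
    gaussianPDFReal 0 ⟨σ ^ 2, sq_nonneg σ⟩ (t - q)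
  have hH : ∀ v, γ / (2 * (β - α)) * (v ^ ((γ - 2) / 2) *
      ((1 / (σ / (β - α))) * stdNormalPDF ((v - (t - α) / (β - α)) / (σ / (β - α))))) =
      (β - α) * H ((β - α) * v + α) := by
    intro v
    have harg : (v - (t - α) / (β - α)) / (σ / (β - α)) = -((t - ((β - α) * v + α)) / σ) := by
      field_simp
      ring
    simp only [H, harg, stdNormalPDF, neg_sq, gaussianPDFReal_zero_eq_stdNormalPDF hσ,
      add_sub_cancel_right, mul_div_cancel_left₀ _ hδ]
    field_simp
  calc ∫ q, convexQuadraticPDF α β γ q * gaussianPDFReal 0 ⟨σ ^ 2, sq_nonneg σ⟩ (t - q)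
      = ∫ q in α..β, H q := by
        rw [intervalIntegral.integral_of_le hab.le, ← integral_indicator measurableSet_Ioc]
        congr 1 with q
        exact (indicator_mul_left _ _ fun q => gaussianPDFReal 0 _ (t - q)).symm
    _ = ∫ v in (0 : ℝ)..1, (β - α) * H ((β - α) * v + α) := by
        rw [intervalIntegral.integral_const_mul, intervalIntegral.integral_comp_mul_add H hδ,
          smul_eq_mul, mul_inv_cancel_left₀ hδ]
        simp
    _ = _ := by
        rw [← intervalIntegral.integral_const_mul]
        exact intervalIntegral.integral_congr fun v _ => (hH v).symm

/-- If `Q` has the convex quadratic distribution with parameters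
`α < β`, `γ > 0`, and `E` is an independent normal with mean `0` and standard deviation
`σ > 0`, then `Y = Q + E` has Lebesgue density
`f_Y(y) = (γ/(2(β−α)))·∫_0^1 v^{(γ−2)/2}·(1/s)·φ((v−m)/s) dv`
with `m = (y−α)/(β−α)` and `s = σ/(β−α)`; that is, `P(Y ≤ y) = ∫_{-∞}^y f_Y(t) dt`. -/
theorem stmt4 (α β γ σ : ℝ) (hab : α < β) (hγ : 0 < γ) (hσ : 0 < σ)
    {Ω : Type*} [MeasurableSpace Ω] (P : MeasureTheory.Measure Ω) [IsProbabilityMeasure P]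
    (Q E : Ω → ℝ) (hQm : Measurable Q) (hEm : Measurable E)
    (hindep : IndepFun Q E P)
    (hQ : ∀ y : ℝ, (P {ω | Q ω ≤ y}).toReal =
      if y < α then 0 else if y ≤ β then ((y - α) / (β - α)) ^ (γ / 2) else 1)
    (hE : P.map E = gaussianReal 0 ⟨σ ^ 2, sq_nonneg σ⟩) :
    ∀ y : ℝ,
      (P {ω | Q ω + E ω ≤ y}).toReal =
        ∫ t in Set.Iic y,
          (γ / (2 * (β - α))) *
            ∫ v in (0 : ℝ)..1,
              v ^ ((γ - 2) / 2) *
                ((1 / (σ / (β - α))) *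
                  stdNormalPDF ((v - (t - α) / (β - α)) / (σ / (β - α)))) := by
  intro y
  have hlawQ : P.map Q = volume.withDensity fun q => ENNReal.ofReal (convexQuadraticPDF α β γ q) :=
    measure_eq_withDensity_of_measureReal_Iic (integrable_convexQuadraticPDF hab hγ)
      (convexQuadraticPDF_nonneg hab hγ) fun x => by
        rw [map_measureReal_apply hQm measurableSet_Iic, setIntegral_convexQuadraticPDF_Iic hab hγ]
        exact hQ x
  have hvar : (⟨σ ^ 2, sq_nonneg σ⟩ : ℝ≥0) ≠ 0 := fun h =>
    pow_ne_zero 2 hσ.ne' (congrArg Subtype.val h)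
  have hlawE := hE.trans (gaussianReal_of_var_ne_zero 0 hvar)
  rw [← measureReal_def, hindep.measureReal_add_le_eq_integral_conv hQm hEm
    measurable_convexQuadraticPDF (measurable_gaussianPDFReal 0 _)
    (convexQuadraticPDF_nonneg hab hγ) (gaussianPDFReal_nonneg 0 _) hlawQ hlawE]
  exact setIntegral_congr_fun measurableSet_Iic fun t _ =>
    integral_convexQuadraticPDF_mul_gaussianPDFReal hab hσ t
end
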